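/- arXiv:1604.06309 — 3 statements merged into one kernel-verified Lean document; each statement's English description precedes it below -/
import Mathlib

section
/- Let r, s be nonzero elements of a field K and let V = K^n. Define the matrix R̂ = Σ_{i=1}^n E_{ii}⊗E_{ii} + r Σ_{i<j} E_{ji}⊗E_{ij} + s^{-1} Σ_{i<j} E_{ij}⊗E_{ji} + (1 - r s^{-1}) Σ_{i<j} E_{jj}⊗E_{ii} acting on V⊗V. Then R̂ satisfies the Hecke relation (R̂ - 1)(R̂ + r s^{-1}) = 0. -/
open Matrix Kronecker BigOperators

/-- Elementary matrix `E i j`. -/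
def Em (n : ℕ) (K : Type*) [Field K] (i j : Fin n) : Matrix (Fin n) (Fin n) K :=
  Matrix.single i j 1

/-- The Benkart–Witherspoon braiding matrix on `V ⊗ V`. -/
def Rhat (n : ℕ) (K : Type*) [Field K] (r s : K) :
    Matrix (Fin n × Fin n) (Fin n × Fin n) K :=
  (∑ i, Em n K i i ⊗ₖ Em n K i i) +
  ∑ i, ∑ j,
    if i < j then
      r • (Em n K j i ⊗ₖ Em n K i j) + s⁻¹ • (Em n K i j ⊗ₖ Em n K j i) +
        (1 - r * s⁻¹) • (Em n K j j ⊗ₖ Em n K i i)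
    else 0

/-!
`R̂` only mixes `e_a ⊗ e_b` with `e_b ⊗ e_a`: it fixes `e_i ⊗ e_i`, and for `i < j` it acts on the
plane spanned by `e_i ⊗ e_j, e_j ⊗ e_i` by a `2 × 2` matrix of trace `1 - r s⁻¹` and determinant
`-r s⁻¹`, whose characteristic polynomial is `(X - 1)(X + r s⁻¹)`. Abstractly, `R̂` is supported on
the diagonal and on the graph of the involution `(a, b) ↦ (b, a)`, and for such a matrix the
quadratic relation `M² = c M + d` reduces to two scalar identities at each index.
-/

namespace Matrix

variable {ι R : Type*} [DecidableEq ι] [CommRing R]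

def diagonalAddGraph (σ : ι → ι) (α β : ι → R) : Matrix ι ι R :=
  of fun x y => (if σ x = y then α x else 0) + (if x = y then β x else 0)

theorem diagonalAddGraph_mul_apply [Fintype ι] (σ : ι → ι) (α β : ι → R) (M : Matrix ι ι R)
    (x z : ι) : (diagonalAddGraph σ α β * M) x z = α x * M (σ x) z + β x * M x z := by
  simp [diagonalAddGraph, mul_apply, add_mul, Finset.sum_add_distrib]

theorem diagonalAddGraph_mul_self [Fintype ι] {σ : ι → ι} (hσ : Function.Involutive σ)
    {α β : ι → R} {c d : R} (hdiag : ∀ x, α x * α (σ x) + β x ^ 2 = c * β x + d)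
    (hgraph : ∀ x, α x * (β (σ x) + β x) = c * α x) :
    diagonalAddGraph σ α β * diagonalAddGraph σ α β = c • diagonalAddGraph σ α β + d • 1 := by
  ext x z
  rw [diagonalAddGraph_mul_apply]
  simp only [diagonalAddGraph, of_apply, hσ x, add_apply, smul_apply, one_apply, smul_eq_mul]
  split_ifs
  · linear_combination hdiag x + hgraph x
  · linear_combination hdiag x
  · linear_combination hgraph x
  · ring

end Matrix

theorem sub_one_mul_add_smul_one_eq_zero_of_mul_self_eq {R A : Type*} [CommRing R] [Ring A]
    [Algebra R A] {a : A} {q : R} (h : a * a = (1 - q) • a + q • 1) :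
    (a - 1) * (a + q • 1) = 0 := by
  rw [sub_mul, mul_add, mul_add, h]
  simp only [mul_smul_comm, mul_one, one_mul]
  module

section

variable {ι K : Type*} [LinearOrder ι] [Field K]

def rhatSwapCoeff (r s : K) (x : ι × ι) : K :=
  if x.2 < x.1 then r else if x.1 < x.2 then s⁻¹ else 0

-- The entry `1` at `(i, i)` is booked here rather than in `rhatSwapCoeff`, so that the scalar
-- identities of `Matrix.diagonalAddGraph_mul_self` also hold at the fixed points of the swap.
def rhatDiagCoeff (r s : K) (x : ι × ι) : K :=
  if x.2 < x.1 then 1 - r * s⁻¹ else if x.1 = x.2 then 1 else 0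

theorem rhatSwapCoeff_mul_swap_add_rhatDiagCoeff_sq (r s : K) (x : ι × ι) :
    rhatSwapCoeff r s x * rhatSwapCoeff r s x.swap + rhatDiagCoeff r s x ^ 2 =
      (1 - r * s⁻¹) * rhatDiagCoeff r s x + r * s⁻¹ := by
  obtain ⟨a, b⟩ := x
  rcases lt_trichotomy a b with h | rfl | h
  · simp [rhatSwapCoeff, rhatDiagCoeff, h, h.not_gt, h.ne, mul_comm]
  · simp [rhatSwapCoeff, rhatDiagCoeff]
  · simp [rhatSwapCoeff, rhatDiagCoeff, h, h.not_gt]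
    ring

theorem rhatSwapCoeff_mul_rhatDiagCoeff_swap_add (r s : K) (x : ι × ι) :
    rhatSwapCoeff r s x * (rhatDiagCoeff r s x.swap + rhatDiagCoeff r s x) =
      (1 - r * s⁻¹) * rhatSwapCoeff r s x := by
  obtain ⟨a, b⟩ := x
  rcases lt_trichotomy a b with h | rfl | h
  · simp [rhatSwapCoeff, rhatDiagCoeff, h, h.not_gt, h.ne, mul_comm]
  · simp [rhatSwapCoeff, rhatDiagCoeff]
  · simp [rhatSwapCoeff, rhatDiagCoeff, h, h.not_gt, h.ne, mul_comm]

end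

theorem Rhat_eq_diagonalAddGraph (n : ℕ) (K : Type*) [Field K] (r s : K) :
    Rhat n K r s = diagonalAddGraph Prod.swap (rhatSwapCoeff r s) (rhatDiagCoeff r s) := by
  ext ⟨a, b⟩ ⟨c, d⟩
  simp only [Rhat, Em, single_kronecker_single, Matrix.add_apply, Matrix.sum_apply,
    Matrix.ite_apply, Matrix.smul_apply, single_apply, Matrix.zero_apply, Prod.mk.injEq, smul_eq_mul, mul_ite, mul_one, mul_zero,
    ite_add_zero, Finset.sum_add_distrib, ite_and, ite_ite_distrib_right (p := _ < _), ite_self]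
  simp only [Finset.sum_ite_irrel, Finset.sum_const_zero, Finset.sum_ite_eq', Finset.mem_univ,
    if_true, diagonalAddGraph, of_apply, rhatSwapCoeff, rhatDiagCoeff, Prod.swap_prod_mk,
    Prod.mk.injEq, ite_and]
  rcases lt_trichotomy a b with h | rfl | h
  · simp [h, h.ne, h.not_gt]
  · simp
  · simp [h, h.ne', h.not_gt]

theorem hecke_relation_general {K : Type*} [Field K] (n : ℕ) (r s : K) :
    (Rhat n K r s - 1) * (Rhat n K r s + (r * s⁻¹) • (1 : Matrix (Fin n × Fin n) (Fin n × Fin n) K)) = 0 := by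
  apply sub_one_mul_add_smul_one_eq_zero_of_mul_self_eq
  rw [Rhat_eq_diagonalAddGraph]
  exact diagonalAddGraph_mul_self Prod.swap_swap
    (rhatSwapCoeff_mul_swap_add_rhatDiagCoeff_sq r s) (rhatSwapCoeff_mul_rhatDiagCoeff_swap_add r s)

theorem hecke_relation {K : Type*} [Field K] (n : ℕ) (r s : K)
    (hr : r ≠ 0) (hs : s ≠ 0) :
    (Rhat n K r s - 1) * (Rhat n K r s + (r * s⁻¹) • (1 : Matrix (Fin n × Fin n) (Fin n × Fin n) K)) = 0 :=
  hecke_relation_general n r s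
end

section
/- Let A be an associative unital algebra over a field K, and let B₁, B₂ ∈ A satisfy the braid relation B₁B₂B₁ = B₂B₁B₂ and the commutation conventions coming from a braiding: suppose B₁, B₂ are both invertible and satisfy the quadratic (Hecke) relations (B_i - λ₁)(B_i - λ₂) = 0 for nonzero scalars λ₁, λ₂ ∈ K. Define B_i(z) = λ₂^{-1} B_i + z λ₁ B_i^{-1} for a scalar z ∈ K. Then for all z, w ∈ K: B₁(z) B₂(zw) B₁(w) = B₂(w) B₁(zw) B₂(z). -/
/-!
The Hecke relation `B² = (λ₁ + λ₂) B - λ₁λ₂` expresses `B⁻¹` as an affine function of `B`, so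
`λ₂⁻¹ B + u λ₁ B⁻¹` is `λ₂⁻¹` times `(1 - u) B + u (λ₁ + λ₂)`. For the latter, both sides of the
Yang–Baxter equation expand, using the braid relation and the Hecke relation, to the same
combination of `B₁B₂B₁`, `B₁B₂`, `B₂B₁`, `B₁`, `B₂` and `1`.
-/

section Baxterization

variable {R A : Type*} [CommRing R] [Ring A] [Algebra R A]

def baxterize (s u : R) (B : A) : A := (1 - u) • B + (u * s) • 1

theorem mul_self_eq_of_hecke {B : A} {l₁ l₂ : R}
    (h : (B - algebraMap R A l₁) * (B - algebraMap R A l₂) = 0) :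
    B * B = (l₁ + l₂) • B - (l₁ * l₂) • 1 := by
  rw [← sub_eq_zero, ← h]
  simp only [Algebra.algebraMap_eq_smul_one, mul_sub, sub_mul, smul_mul_assoc, mul_smul_comm,
    one_mul, mul_one]
  module

theorem baxterize_yangBaxter {B₁ B₂ : A} {s p : R}
    (hbraid : B₁ * B₂ * B₁ = B₂ * B₁ * B₂)
    (hsq₁ : B₁ * B₁ = s • B₁ - p • 1) (hsq₂ : B₂ * B₂ = s • B₂ - p • 1) (z w : R) :
    baxterize s z B₁ * baxterize s (z * w) B₂ * baxterize s w B₁ =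
      baxterize s w B₂ * baxterize s (z * w) B₁ * baxterize s z B₂ := by
  rw [mul_assoc] at hbraid
  simp only [baxterize, add_mul, mul_add, smul_mul_assoc, mul_smul_comm, smul_smul, one_mul,
    mul_one, mul_assoc, hbraid, hsq₁, hsq₂, smul_sub]
  match_scalars <;> ring

end Baxterization

section Field

variable {K A : Type*} [Field K] [Ring A] [Algebra K A]

theorem left_inv_eq_of_mul_self_eq {B Bi : A} {s p : K} (hp : p ≠ 0) (hinv : Bi * B = 1)
    (hsq : B * B = s • B - p • 1) : Bi = p⁻¹ • (s • 1 - B) := by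
  have hright : B * (p⁻¹ • (s • 1 - B)) = 1 := by
    rw [mul_smul_comm, mul_sub, mul_smul_comm, mul_one, hsq, sub_sub_cancel, smul_smul,
      inv_mul_cancel₀ hp, one_smul]
  calc Bi = Bi * B * (p⁻¹ • (s • 1 - B)) := by rw [mul_assoc, hright, mul_one]
    _ = p⁻¹ • (s • 1 - B) := by rw [hinv, one_mul]

theorem inv_smul_add_smul_eq_smul_baxterize {B Bi : A} {l₁ l₂ : K} (h₁ : l₁ ≠ 0)
    (hBi : Bi = (l₁ * l₂)⁻¹ • ((l₁ + l₂) • 1 - B)) (u : K) :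
    l₂⁻¹ • B + (u * l₁) • Bi = l₂⁻¹ • baxterize (l₁ + l₂) u B := by
  subst hBi
  simp only [baxterize, smul_add, smul_sub, smul_smul]
  match_scalars <;> field_simp
  ring

end Field

theorem yang_baxterization_general {K A : Type*} [Field K] [Ring A] [Algebra K A]
    (B₁ B₂ B₁i B₂i : A) (lam₁ lam₂ : K) (h₁ : lam₁ ≠ 0) (h₂ : lam₂ ≠ 0)
    (hbraid : B₁ * B₂ * B₁ = B₂ * B₁ * B₂)
    (hinv₁' : B₁i * B₁ = 1)
    (hinv₂' : B₂i * B₂ = 1)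
    (hq₁ : (B₁ - algebraMap K A lam₁) * (B₁ - algebraMap K A lam₂) = 0)
    (hq₂ : (B₂ - algebraMap K A lam₁) * (B₂ - algebraMap K A lam₂) = 0) :
    ∀ z w : K,
      (lam₂⁻¹ • B₁ + (z * lam₁) • B₁i) * (lam₂⁻¹ • B₂ + (z * w * lam₁) • B₂i) *
          (lam₂⁻¹ • B₁ + (w * lam₁) • B₁i) =
        (lam₂⁻¹ • B₂ + (w * lam₁) • B₂i) * (lam₂⁻¹ • B₁ + (z * w * lam₁) • B₁i) *
          (lam₂⁻¹ • B₂ + (z * lam₁) • B₂i) := by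
  intro z w
  have hp : lam₁ * lam₂ ≠ 0 := mul_ne_zero h₁ h₂
  have hsq₁ := mul_self_eq_of_hecke hq₁
  have hsq₂ := mul_self_eq_of_hecke hq₂
  have hB₁i := left_inv_eq_of_mul_self_eq hp hinv₁' hsq₁
  have hB₂i := left_inv_eq_of_mul_self_eq hp hinv₂' hsq₂
  simp only [inv_smul_add_smul_eq_smul_baxterize h₁ hB₁i,
    inv_smul_add_smul_eq_smul_baxterize h₁ hB₂i, smul_mul_smul]
  rw [baxterize_yangBaxter hbraid hsq₁ hsq₂]

/-- Yang–Baxterization: a braid pair with two eigenvalues yields a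
spectral-parameter solution of the braided Yang–Baxter equation. -/
theorem yang_baxterization {K A : Type*} [Field K] [Ring A] [Algebra K A]
    (B₁ B₂ B₁i B₂i : A) (lam₁ lam₂ : K) (h₁ : lam₁ ≠ 0) (h₂ : lam₂ ≠ 0)
    (hbraid : B₁ * B₂ * B₁ = B₂ * B₁ * B₂)
    (hinv₁ : B₁ * B₁i = 1) (hinv₁' : B₁i * B₁ = 1)
    (hinv₂ : B₂ * B₂i = 1) (hinv₂' : B₂i * B₂ = 1)
    (hq₁ : (B₁ - algebraMap K A lam₁) * (B₁ - algebraMap K A lam₂) = 0)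
    (hq₂ : (B₂ - algebraMap K A lam₁) * (B₂ - algebraMap K A lam₂) = 0) :
    ∀ z w : K,
      (lam₂⁻¹ • B₁ + (z * lam₁) • B₁i) * (lam₂⁻¹ • B₂ + (z * w * lam₁) • B₂i) *
          (lam₂⁻¹ • B₁ + (w * lam₁) • B₁i) =
        (lam₂⁻¹ • B₂ + (w * lam₁) • B₂i) * (lam₂⁻¹ • B₁ + (z * w * lam₁) • B₁i) *
          (lam₂⁻¹ • B₂ + (z * lam₁) • B₂i) :=
  yang_baxterization_general B₁ B₂ B₁i B₂i lam₁ lam₂ h₁ h₂ hbraid hinv₁' hinv₂' hq₁ hq₂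
end

section
/- Let r, s be nonzero elements of a field K. For z ∈ K with z ≠ 0 and 1 - zrs^{-1} ≠ 0, let R(z) be the two-parameter R-matrix R(z) = Σ_i E_{ii}⊗E_{ii} + ((1-z)r/(1-zrs^{-1})) Σ_{i>j} E_{ii}⊗E_{jj} + ((1-z)s^{-1}/(1-zrs^{-1})) Σ_{i<j} E_{ii}⊗E_{jj} + ((1-rs^{-1})/(1-zrs^{-1})) Σ_{i>j} E_{ij}⊗E_{ji} + ((1-rs^{-1})z/(1-zrs^{-1})) Σ_{i<j} E_{ij}⊗E_{ji}. Then for all valid z, w the quantum Yang–Baxter equation holds: R₁₂(z) R₁₃(zw) R₂₃(w) = R₂₃(w) R₁₃(zw) R₁₂(z) on (K^n)^{⊗3}. -/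
open Matrix Kronecker BigOperators

def RZ (n : ℕ) (K : Type*) [Field K] (r s z : K) :
    Matrix (Fin n × Fin n) (Fin n × Fin n) K :=
  (∑ i, Em n K i i ⊗ₖ Em n K i i)
  + ((1 - z) * r / (1 - z * r * s⁻¹)) • (∑ i, ∑ j, if j < i then Em n K i i ⊗ₖ Em n K j j else 0)
  + ((1 - z) * s⁻¹ / (1 - z * r * s⁻¹)) • (∑ i, ∑ j, if i < j then Em n K i i ⊗ₖ Em n K j j else 0)
  + ((1 - r * s⁻¹) / (1 - z * r * s⁻¹)) • (∑ i, ∑ j, if j < i then Em n K i j ⊗ₖ Em n K j i else 0)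
  + ((1 - r * s⁻¹) * z / (1 - z * r * s⁻¹)) • (∑ i, ∑ j, if i < j then Em n K i j ⊗ₖ Em n K j i else 0)

/-- `M` acting on factors 1 and 2 of `V ⊗ V ⊗ V`. -/
def op12 {n : ℕ} {K : Type*} [Field K] (M : Matrix (Fin n × Fin n) (Fin n × Fin n) K) :
    Matrix (Fin n × Fin n × Fin n) (Fin n × Fin n × Fin n) K :=
  fun p q => M (p.1, p.2.1) (q.1, q.2.1) * (if p.2.2 = q.2.2 then 1 else 0)

/-- `M` acting on factors 2 and 3 of `V ⊗ V ⊗ V`. -/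
def op23 {n : ℕ} {K : Type*} [Field K] (M : Matrix (Fin n × Fin n) (Fin n × Fin n) K) :
    Matrix (Fin n × Fin n × Fin n) (Fin n × Fin n × Fin n) K :=
  fun p q => (if p.1 = q.1 then 1 else 0) * M p.2 q.2

/-- `M` acting on factors 1 and 3 of `V ⊗ V ⊗ V`. -/
def op13 {n : ℕ} {K : Type*} [Field K] (M : Matrix (Fin n × Fin n) (Fin n × Fin n) K) :
    Matrix (Fin n × Fin n × Fin n) (Fin n × Fin n × Fin n) K :=
  fun p q => M (p.1, p.2.2) (q.1, q.2.2) * (if p.2.1 = q.2.1 then 1 else 0)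

/-! Multiplying `R(z)` by its denominator `1 - z r s⁻¹` gives a matrix with polynomial entries,
and the Yang–Baxter equation is homogeneous in each of its three factors, so it suffices to prove
it for these numerators.
Each numerator sends `e_a ⊗ e_b ⊗ e_c` to a combination of itself and the vector with two factors
swapped, with weights depending only on the relative order of the indices. Hence row `(a, b, c)`
of either side is a combination of the basis rows indexed by permutations of `(a, b, c)`, and in
each of the 13 order types of `(a, b, c)` comparing coefficients is a polynomial identity in
`r`, `s⁻¹`, `z` and `w`. -/

section

variable {n : ℕ} {K : Type*} [Field K]

theorem Em_kronecker_Em_apply (i j k l a b c d : Fin n) :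
    (Em n K i j ⊗ₖ Em n K k l) (a, b) (c, d) = if i = a ∧ j = c ∧ k = b ∧ l = d then 1 else 0 := by
  simp only [kroneckerMap_apply, Em, single_apply, ite_zero_mul_ite_zero, mul_one, and_assoc]

theorem sum_Em_kronecker_Em_self_apply (i j k l : Fin n) :
    (∑ x, Em n K x x ⊗ₖ Em n K x x) (i, j) (k, l) = if k = i ∧ l = i ∧ j = i then 1 else 0 := by
  simp only [Matrix.sum_apply, Em_kronecker_Em_apply]
  rw [Fintype.sum_eq_single i fun x hx => by simp [hx]]
  simp only [true_and]
  grind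

theorem sum_ite_Em_kronecker_Em_apply (P : Fin n → Fin n → Prop) [DecidableRel P]
    (i j k l : Fin n) :
    (∑ x, ∑ y, if P x y then Em n K x x ⊗ₖ Em n K y y else 0) (i, j) (k, l) =
      if k = i ∧ l = j ∧ P i j then 1 else 0 := by
  simp only [Matrix.sum_apply, Matrix.ite_apply, Matrix.zero_apply, Em_kronecker_Em_apply,
    ← ite_and]
  rw [Fintype.sum_eq_single i fun x hx => by simp [hx],
    Fintype.sum_eq_single j fun y hy => by simp [hy]]
  simp only [true_and]
  grind

theorem sum_ite_Em_kronecker_Em_swap_apply (P : Fin n → Fin n → Prop) [DecidableRel P]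
    (i j k l : Fin n) :
    (∑ x, ∑ y, if P x y then Em n K x y ⊗ₖ Em n K y x else 0) (i, j) (k, l) =
      if k = j ∧ l = i ∧ P i j then 1 else 0 := by
  simp only [Matrix.sum_apply, Matrix.ite_apply, Matrix.zero_apply, Em_kronecker_Em_apply,
    ← ite_and]
  rw [Fintype.sum_eq_single i fun x hx => by simp [hx],
    Fintype.sum_eq_single j fun y hy => by simp [hy]]
  simp only [true_and]
  grind

/-- The coefficient of `E_ii ⊗ E_jj` in `(1 - z r t) • R(z)`, where `t` stands for `s⁻¹`. -/
def diagWeight (r t z : K) (i j : Fin n) : K :=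
  if i = j then 1 - z * r * t else if j < i then (1 - z) * r else (1 - z) * t

/-- The coefficient of `E_ij ⊗ E_ji` (for `i ≠ j`) in `(1 - z r t) • R(z)`. -/
def swapWeight (r t z : K) (i j : Fin n) : K :=
  if i = j then 0 else if j < i then 1 - r * t else (1 - r * t) * z

theorem diagWeight_self (r t z : K) (i : Fin n) : diagWeight r t z i i = 1 - z * r * t :=
  if_pos rfl

theorem swapWeight_self (r t z : K) (i : Fin n) : swapWeight r t z i i = 0 :=
  if_pos rfl

theorem diagWeight_of_lt (r t z : K) {i j : Fin n} (h : i < j) :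
    diagWeight r t z i j = (1 - z) * t := by
  rw [diagWeight, if_neg h.ne, if_neg h.not_gt]

theorem diagWeight_of_gt (r t z : K) {i j : Fin n} (h : j < i) :
    diagWeight r t z i j = (1 - z) * r := by
  rw [diagWeight, if_neg h.ne', if_pos h]

theorem swapWeight_of_lt (r t z : K) {i j : Fin n} (h : i < j) :
    swapWeight r t z i j = (1 - r * t) * z := by
  rw [swapWeight, if_neg h.ne, if_neg h.not_gt]

theorem swapWeight_of_gt (r t z : K) {i j : Fin n} (h : j < i) :
    swapWeight r t z i j = 1 - r * t := by
  rw [swapWeight, if_neg h.ne', if_pos h]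

variable (n K) in
def RZNum (r t z : K) : Matrix (Fin n × Fin n) (Fin n × Fin n) K :=
  fun p q => (if q = p then diagWeight r t z p.1 p.2 else 0) +
    (if q = p.swap then swapWeight r t z p.1 p.2 else 0)

theorem RZ_eq_inv_smul_RZNum {r s z : K} (h : 1 - z * r * s⁻¹ ≠ 0) :
    RZ n K r s z = (1 - z * r * s⁻¹)⁻¹ • RZNum n K r s⁻¹ z := by
  ext ⟨i, j⟩ ⟨k, l⟩
  simp only [RZ, Matrix.add_apply, Matrix.smul_apply, sum_Em_kronecker_Em_self_apply,
    sum_ite_Em_kronecker_Em_apply, sum_ite_Em_kronecker_Em_swap_apply, RZNum, diagWeight,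
    swapWeight, smul_eq_mul, Prod.mk.injEq, Prod.swap_prod_mk]
  obtain hij | rfl | hij := lt_trichotomy i j
  · simp only [hij, hij.ne, hij.ne', hij.not_gt, ↓reduceIte, and_true, and_false, mul_ite, mul_one,
      mul_zero, add_zero, zero_add]
    split_ifs <;> ring
  · simp [h]
  · simp only [hij, hij.ne, hij.ne', hij.not_gt, ↓reduceIte, and_true, and_false, mul_ite, mul_one,
      mul_zero, add_zero, zero_add]
    split_ifs <;> ring

theorem op12_smul (c : K) (M : Matrix (Fin n × Fin n) (Fin n × Fin n) K) :
    op12 (c • M) = c • op12 M := by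
  ext p q
  simp [op12]

theorem op13_smul (c : K) (M : Matrix (Fin n × Fin n) (Fin n × Fin n) K) :
    op13 (c • M) = c • op13 M := by
  ext p q
  simp [op13]

theorem op23_smul (c : K) (M : Matrix (Fin n × Fin n) (Fin n × Fin n) K) :
    op23 (c • M) = c • op23 M := by
  ext p q
  simp [op23, mul_left_comm]

variable {m : Type*}

theorem op12_mul_row (M : Matrix (Fin n × Fin n) (Fin n × Fin n) K)
    (Y : Matrix (Fin n × Fin n × Fin n) m K) (a b c : Fin n) :
    (op12 M * Y) (a, b, c) = ∑ k, ∑ l, M (a, b) (k, l) • Y (k, l, c) := by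
  ext q
  simp [Matrix.mul_apply, op12, Fintype.sum_prod_type, Finset.sum_apply]

theorem op13_mul_row (M : Matrix (Fin n × Fin n) (Fin n × Fin n) K)
    (Y : Matrix (Fin n × Fin n × Fin n) m K) (a b c : Fin n) :
    (op13 M * Y) (a, b, c) = ∑ k, ∑ l, M (a, c) (k, l) • Y (k, b, l) := by
  ext q
  simp [Matrix.mul_apply, op13, Fintype.sum_prod_type, Finset.sum_apply]

theorem op23_mul_row (M : Matrix (Fin n × Fin n) (Fin n × Fin n) K)
    (Y : Matrix (Fin n × Fin n × Fin n) m K) (a b c : Fin n) :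
    (op23 M * Y) (a, b, c) = ∑ k, ∑ l, M (b, c) (k, l) • Y (a, k, l) := by
  ext q
  simp [Matrix.mul_apply, op23, Fintype.sum_prod_type, Finset.sum_apply]

theorem sum_sum_RZNum_smul {V : Type*} [AddCommMonoid V] [Module K V] (r t z : K) (i j : Fin n)
    (f : Fin n → Fin n → V) :
    ∑ k, ∑ l, RZNum n K r t z (i, j) (k, l) • f k l =
      diagWeight r t z i j • f i j + swapWeight r t z i j • f j i := by
  simp [RZNum, add_smul, ite_smul, Finset.sum_add_distrib, ite_and]

theorem yangBaxter_RZNum (r t u v : K) :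
    op12 (RZNum n K r t u) * op13 (RZNum n K r t (u * v)) * op23 (RZNum n K r t v) =
      op23 (RZNum n K r t v) * op13 (RZNum n K r t (u * v)) * op12 (RZNum n K r t u) := by
  rw [← mul_one (_ * op23 _), ← mul_one (_ * op12 _)]
  funext ⟨a, b, c⟩
  simp only [Matrix.mul_assoc, op12_mul_row, op13_mul_row, op23_mul_row, sum_sum_RZNum_smul]
  rcases lt_trichotomy a b with hab | hab | hab <;> rcases lt_trichotomy b c with hbc | hbc | hbc <;>
    rcases lt_trichotomy a c with hac | hac | hac <;> subst_vars
  all_goals first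
    | (exfalso; order)
    | (simp (disch := assumption) only [diagWeight_self, swapWeight_self, diagWeight_of_lt,
        diagWeight_of_gt, swapWeight_of_lt, swapWeight_of_gt]
       match_scalars <;> ring)

end

theorem quantum_yang_baxter_general {K : Type*} [Field K] (n : ℕ) (r s : K) :
    ∀ z w : K, z ≠ 0 → w ≠ 0 →
      1 - z * r * s⁻¹ ≠ 0 → 1 - z * w * r * s⁻¹ ≠ 0 → 1 - w * r * s⁻¹ ≠ 0 →
      op12 (RZ n K r s z) * op13 (RZ n K r s (z * w)) * op23 (RZ n K r s w) =
        op23 (RZ n K r s w) * op13 (RZ n K r s (z * w)) * op12 (RZ n K r s z) := by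
  intro z w _ _ hz hzw hw
  simp only [RZ_eq_inv_smul_RZNum hz, RZ_eq_inv_smul_RZNum hzw, RZ_eq_inv_smul_RZNum hw,
    op12_smul, op13_smul, op23_smul, Matrix.smul_mul, Matrix.mul_smul, smul_smul,
    yangBaxter_RZNum]
  congr 1
  ring

theorem quantum_yang_baxter {K : Type*} [Field K] (n : ℕ) (r s : K)
    (hr : r ≠ 0) (hs : s ≠ 0) :
    ∀ z w : K, z ≠ 0 → w ≠ 0 →
      1 - z * r * s⁻¹ ≠ 0 → 1 - z * w * r * s⁻¹ ≠ 0 → 1 - w * r * s⁻¹ ≠ 0 →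
      op12 (RZ n K r s z) * op13 (RZ n K r s (z * w)) * op23 (RZ n K r s w) =
        op23 (RZ n K r s w) * op13 (RZ n K r s (z * w)) * op12 (RZ n K r s z) :=
  quantum_yang_baxter_general n r s
end
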